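/- arXiv:1410.5038 — 7 statements merged into one kernel-verified Lean document; each statement's English description precedes it below -/
import Mathlib

section
/- ⊻-disjunction property for PL(⊻): for all formulas φ, ψ of PL(⊻), the formula φ⊻ψ is valid if and only if φ is valid or ψ is valid. -/
/-- Formulas of `PL(⊻)`: propositional logic in negation normal form
extended with intuitionistic disjunction `⊻` (`idis`). -/
inductive PLIForm : Type
  | pos : ℕ → PLIForm
  | neg : ℕ → PLIForm
  | and : PLIForm → PLIForm → PLIForm
  | or  : PLIForm → PLIForm → PLIForm
  | idis : PLIForm → PLIForm → PLIForm

/-- Team semantics for `PL(⊻)`. -/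
def PLISat : Set (ℕ → Bool) → PLIForm → Prop
  | X, .pos p => ∀ s ∈ X, s p = true
  | X, .neg p => ∀ s ∈ X, s p = false
  | X, .and φ ψ => PLISat X φ ∧ PLISat X ψ
  | X, .or φ ψ => ∃ Y Z, Y ∪ Z = X ∧ PLISat Y φ ∧ PLISat Z ψ
  | X, .idis φ ψ => PLISat X φ ∨ PLISat X ψ

/-- `PL(⊻)` satisfaction is downward closed. -/
lemma PLISat_mono : ∀ (χ : PLIForm) (X Y : Set (ℕ → Bool)), Y ⊆ X →
    PLISat X χ → PLISat Y χ
  | .pos p, X, Y, hYX, h => fun s hs => h s (hYX hs)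
  | .neg p, X, Y, hYX, h => fun s hs => h s (hYX hs)
  | .and φ ψ, X, Y, hYX, h =>
      ⟨PLISat_mono φ X Y hYX h.1, PLISat_mono ψ X Y hYX h.2⟩
  | .or φ ψ, X, Y, hYX, ⟨A, B, hAB, hA, hB⟩ => by
      refine ⟨A ∩ Y, B ∩ Y, ?_, PLISat_mono φ A (A ∩ Y) Set.inter_subset_left hA,
        PLISat_mono ψ B (B ∩ Y) Set.inter_subset_left hB⟩
      rw [← Set.union_inter_distrib_right, hAB]
      exact Set.inter_eq_right.mpr hYX
  | .idis φ ψ, X, Y, hYX, h =>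
      h.imp (PLISat_mono φ X Y hYX) (PLISat_mono ψ X Y hYX)

/-- `⊻`-disjunction property for `PL(⊻)`: `φ ⊻ ψ` is valid
iff `φ` is valid or `ψ` is valid. -/
theorem pli_disjunction_property (φ ψ : PLIForm) :
    (∀ X : Set (ℕ → Bool), PLISat X (.idis φ ψ)) ↔
      (∀ X : Set (ℕ → Bool), PLISat X φ) ∨
      (∀ X : Set (ℕ → Bool), PLISat X ψ) := by
  constructor
  · intro h
    by_contra hc
    push_neg at hc
    obtain ⟨⟨X, hX⟩, ⟨Y, hY⟩⟩ := hc
    rcases h (X ∪ Y) with h' | h'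
    · exact hX (PLISat_mono φ (X ∪ Y) X Set.subset_union_left h')
    · exact hY (PLISat_mono ψ (X ∪ Y) Y Set.subset_union_right h')
  · rintro (h | h) X
    · exact Or.inl (h X)
    · exact Or.inr (h X)
end

section
/- ⊻-disjunction property for ML(⊻): for all formulas φ, ψ of ML(⊻), the formula φ⊻ψ is valid if and only if φ is valid or ψ is valid. -/
/-- A Kripke model over a (nonempty) type `W` of worlds: an accessibility
relation `R` and a valuation `V`. -/
structure Kripke (W : Type) where
  R : W → W → Prop
  V : ℕ → Set W

/-- The image team `R[T] = {w | ∃ v ∈ T, v R w}`. -/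
def Kripke.img {W : Type} (K : Kripke W) (T : Set W) : Set W :=
  {w | ∃ v ∈ T, K.R v w}

/-- `T[R]S`: every world of `T` has an `R`-successor in `S` and every world of
`S` has an `R`-predecessor in `T`. -/
def Kripke.step {W : Type} (K : Kripke W) (T S : Set W) : Prop :=
  (∀ w ∈ T, ∃ v ∈ S, K.R w v) ∧ (∀ v ∈ S, ∃ w ∈ T, K.R w v)

/-- Formulas of `ML(⊻)`: modal logic in negation normal form extended with
intuitionistic disjunction `⊻` (`idis`). -/
inductive MLIForm : Type
  | pos : ℕ → MLIForm
  | neg : ℕ → MLIForm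
  | and : MLIForm → MLIForm → MLIForm
  | or  : MLIForm → MLIForm → MLIForm
  | dia : MLIForm → MLIForm
  | box : MLIForm → MLIForm
  | idis : MLIForm → MLIForm → MLIForm

/-- Team semantics for `ML(⊻)`. -/
def MLISat {W : Type} (K : Kripke W) : Set W → MLIForm → Prop
  | T, .pos p => T ⊆ K.V p
  | T, .neg p => T ∩ K.V p = ∅
  | T, .and φ ψ => MLISat K T φ ∧ MLISat K T ψ
  | T, .or φ ψ => ∃ T₁ T₂, T₁ ∪ T₂ = T ∧ MLISat K T₁ φ ∧ MLISat K T₂ ψ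
  | T, .dia φ => ∃ T', K.step T T' ∧ MLISat K T' φ
  | T, .box φ => MLISat K (K.img T) φ
  | T, .idis φ ψ => MLISat K T φ ∨ MLISat K T ψ

/-- Disjoint union of two Kripke models. -/
def Kripke.sum {W₁ W₂ : Type} (K₁ : Kripke W₁) (K₂ : Kripke W₂) :
    Kripke (W₁ ⊕ W₂) where
  R a b := match a, b with
    | .inl x, .inl y => K₁.R x y
    | .inr x, .inr y => K₂.R x y
    | _, _ => False
  V p := Sum.inl '' K₁.V p ∪ Sum.inr '' K₂.V p

lemma mli_proj_left {W₁ W₂ : Type} (K₁ : Kripke W₁) (K₂ : Kripke W₂) :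
    ∀ (χ : MLIForm) (T : Set (W₁ ⊕ W₂)), MLISat (K₁.sum K₂) T χ →
      MLISat K₁ (Sum.inl ⁻¹' T) χ := by
  intro χ
  induction χ with
  | pos p =>
    intro T h w hw
    have := h hw
    rcases this with ⟨x, hx, hxe⟩ | ⟨x, hx, hxe⟩
    · cases hxe; exact hx
    · cases hxe
  | neg p =>
    intro T h
    ext w
    simp only [Set.mem_inter_iff, Set.mem_preimage, Set.mem_empty_iff_false, iff_false]
    rintro ⟨hw, hv⟩
    have : (Sum.inl w : W₁ ⊕ W₂) ∈ T ∩ (K₁.sum K₂).V p := by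
      refine ⟨hw, Or.inl ⟨w, hv, rfl⟩⟩
    rw [h] at this
    exact this
  | and φ ψ ihφ ihψ =>
    intro T h
    exact ⟨ihφ T h.1, ihψ T h.2⟩
  | or φ ψ ihφ ihψ =>
    rintro T ⟨T₁, T₂, hu, h₁, h₂⟩
    exact ⟨Sum.inl ⁻¹' T₁, Sum.inl ⁻¹' T₂, by rw [← Set.preimage_union, hu],
      ihφ T₁ h₁, ihψ T₂ h₂⟩
  | dia φ ih =>
    rintro T ⟨S, ⟨hf, hb⟩, hS⟩
    refine ⟨Sum.inl ⁻¹' S, ⟨?_, ?_⟩, ih S hS⟩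
    · intro w hw
      rcases hf _ hw with ⟨v, hv, hr⟩
      cases v with
      | inl v => exact ⟨v, hv, hr⟩
      | inr v => exact absurd hr (by simp [Kripke.sum])
    · intro v hv
      rcases hb _ hv with ⟨w, hw, hr⟩
      cases w with
      | inl w => exact ⟨w, hw, hr⟩
      | inr w => exact absurd hr (by simp [Kripke.sum])
  | box φ ih =>
    intro T h
    have key : Sum.inl ⁻¹' ((K₁.sum K₂).img T) = K₁.img (Sum.inl ⁻¹' T) := by
      ext w
      simp only [Set.mem_preimage, Kripke.img, Set.mem_setOf_eq]
      constructor
      · rintro ⟨v, hv, hr⟩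
        cases v with
        | inl v => exact ⟨v, hv, hr⟩
        | inr v => exact absurd hr (by simp [Kripke.sum])
      · rintro ⟨v, hv, hr⟩
        exact ⟨Sum.inl v, hv, hr⟩
    have := ih _ h
    rwa [key] at this
  | idis φ ψ ihφ ihψ =>
    rintro T (h | h)
    · exact Or.inl (ihφ T h)
    · exact Or.inr (ihψ T h)

lemma mli_proj_right {W₁ W₂ : Type} (K₁ : Kripke W₁) (K₂ : Kripke W₂) :
    ∀ (χ : MLIForm) (T : Set (W₁ ⊕ W₂)), MLISat (K₁.sum K₂) T χ →
      MLISat K₂ (Sum.inr ⁻¹' T) χ := by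
  intro χ
  induction χ with
  | pos p =>
    intro T h w hw
    have := h hw
    rcases this with ⟨x, hx, hxe⟩ | ⟨x, hx, hxe⟩
    · cases hxe
    · cases hxe; exact hx
  | neg p =>
    intro T h
    ext w
    simp only [Set.mem_inter_iff, Set.mem_preimage, Set.mem_empty_iff_false, iff_false]
    rintro ⟨hw, hv⟩
    have : (Sum.inr w : W₁ ⊕ W₂) ∈ T ∩ (K₁.sum K₂).V p := by
      refine ⟨hw, Or.inr ⟨w, hv, rfl⟩⟩
    rw [h] at this
    exact this
  | and φ ψ ihφ ihψ =>
    intro T h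
    exact ⟨ihφ T h.1, ihψ T h.2⟩
  | or φ ψ ihφ ihψ =>
    rintro T ⟨T₁, T₂, hu, h₁, h₂⟩
    exact ⟨Sum.inr ⁻¹' T₁, Sum.inr ⁻¹' T₂, by rw [← Set.preimage_union, hu],
      ihφ T₁ h₁, ihψ T₂ h₂⟩
  | dia φ ih =>
    rintro T ⟨S, ⟨hf, hb⟩, hS⟩
    refine ⟨Sum.inr ⁻¹' S, ⟨?_, ?_⟩, ih S hS⟩
    · intro w hw
      rcases hf _ hw with ⟨v, hv, hr⟩
      cases v with
      | inl v => exact absurd hr (by simp [Kripke.sum])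
      | inr v => exact ⟨v, hv, hr⟩
    · intro v hv
      rcases hb _ hv with ⟨w, hw, hr⟩
      cases w with
      | inl w => exact absurd hr (by simp [Kripke.sum])
      | inr w => exact ⟨w, hw, hr⟩
  | box φ ih =>
    intro T h
    have key : Sum.inr ⁻¹' ((K₁.sum K₂).img T) = K₂.img (Sum.inr ⁻¹' T) := by
      ext w
      simp only [Set.mem_preimage, Kripke.img, Set.mem_setOf_eq]
      constructor
      · rintro ⟨v, hv, hr⟩
        cases v with
        | inl v => exact absurd hr (by simp [Kripke.sum])
        | inr v => exact ⟨v, hv, hr⟩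
      · rintro ⟨v, hv, hr⟩
        exact ⟨Sum.inr v, hv, hr⟩
    have := ih _ h
    rwa [key] at this
  | idis φ ψ ihφ ihψ =>
    rintro T (h | h)
    · exact Or.inl (ihφ T h)
    · exact Or.inr (ihψ T h)

/-- `⊻`-disjunction property for `ML(⊻)`: `φ ⊻ ψ` is valid
iff `φ` is valid or `ψ` is valid. -/
theorem mli_disjunction_property (φ ψ : MLIForm) :
    (∀ (W : Type) [Nonempty W] (K : Kripke W) (T : Set W),
        MLISat K T (.idis φ ψ)) ↔
      (∀ (W : Type) [Nonempty W] (K : Kripke W) (T : Set W), MLISat K T φ) ∨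
      (∀ (W : Type) [Nonempty W] (K : Kripke W) (T : Set W), MLISat K T ψ) := by
  constructor
  · intro h
    by_contra hc
    push_neg at hc
    obtain ⟨hφ, hψ⟩ := hc
    obtain ⟨W₁, inst₁, K₁, T₁, h₁⟩ := hφ
    obtain ⟨W₂, inst₂, K₂, T₂, h₂⟩ := hψ
    have : Nonempty (W₁ ⊕ W₂) := ⟨Sum.inl inst₁.some⟩
    have hval := h (W₁ ⊕ W₂) (K₁.sum K₂) (Sum.inl '' T₁ ∪ Sum.inr '' T₂)
    rcases hval with hv | hv
    · apply h₁
      have := mli_proj_left K₁ K₂ φ _ hv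
      have heq : Sum.inl ⁻¹' (Sum.inl '' T₁ ∪ Sum.inr '' T₂) = T₁ := by
        ext w; simp
      rwa [heq] at this
    · apply h₂
      have := mli_proj_right K₁ K₂ ψ _ hv
      have heq : Sum.inr ⁻¹' (Sum.inl '' T₁ ∪ Sum.inr '' T₂) = T₂ := by
        ext w; simp
      rwa [heq] at this
  · rintro (h | h) W _ K T
    · exact Or.inl (h W K T)
    · exact Or.inr (h W K T)
end

section
/- Normal form for PL(⊻): let φ be a formula of PL(⊻) and let F be the set of all ⊻-selection functions for φ. Then for every propositional team X whose domain contains the proposition symbols of φ: X ⊨ φ if and only if X ⊨ φ^f for some f ∈ F (i.e., φ is equivalent to the intuitionistic disjunction of the PL-formulas φ^f over all f ∈ F). -/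
/-- Formulas of propositional logic `PL` in negation normal form. -/
inductive PLForm : Type
  | pos : ℕ → PLForm
  | neg : ℕ → PLForm
  | and : PLForm → PLForm → PLForm
  | or  : PLForm → PLForm → PLForm

/-- Team semantics for `PL`. A team is a set of (total) assignments. -/
def PLSat : Set (ℕ → Bool) → PLForm → Prop
  | X, .pos p => ∀ s ∈ X, s p = true
  | X, .neg p => ∀ s ∈ X, s p = false
  | X, .and φ ψ => PLSat X φ ∧ PLSat X ψ
  | X, .or φ ψ => ∃ Y Z, Y ∪ Z = X ∧ PLSat Y φ ∧ PLSat Z ψ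

/-- The list of all formulas `φ^f`, for `f` a `⊻`-selection function for `φ`:
each occurrence of a subformula `ψ ⊻ θ` is (simultaneously) replaced by one of
its two immediate disjuncts. Each `φ^f` is a `⊻`-free `PL`-formula. -/
def PLISelections : PLIForm → List PLForm
  | .pos p => [.pos p]
  | .neg p => [.neg p]
  | .and φ ψ => (PLISelections φ).flatMap fun a =>
      (PLISelections ψ).map fun b => PLForm.and a b
  | .or φ ψ => (PLISelections φ).flatMap fun a =>
      (PLISelections ψ).map fun b => PLForm.or a b
  | .idis φ ψ => PLISelections φ ++ PLISelections ψ

/-- Normal form for `PL(⊻)`: a team satisfies `φ` iff it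
satisfies `φ^f` for some `⊻`-selection function `f` for `φ`, i.e. `φ` is
equivalent to the intuitionistic disjunction of the `PL`-formulas `φ^f`. -/
theorem pli_normal_form (φ : PLIForm) (X : Set (ℕ → Bool)) :
    PLISat X φ ↔ ∃ χ ∈ PLISelections φ, PLSat X χ := by
  induction φ generalizing X with
  | pos p => simp [PLISat, PLISelections, PLSat]
  | neg p => simp [PLISat, PLISelections, PLSat]
  | and φ ψ ihφ ihψ =>
    simp only [PLISat, PLISelections, ihφ, ihψ, List.mem_flatMap, List.mem_map]
    constructor
    · rintro ⟨⟨a, ha, hXa⟩, ⟨b, hb, hXb⟩⟩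
      exact ⟨.and a b, ⟨a, ha, b, hb, rfl⟩, hXa, hXb⟩
    · rintro ⟨χ, ⟨a, ha, b, hb, rfl⟩, hXa, hXb⟩
      exact ⟨⟨a, ha, hXa⟩, ⟨b, hb, hXb⟩⟩
  | or φ ψ ihφ ihψ =>
    simp only [PLISat, PLISelections, List.mem_flatMap, List.mem_map]
    constructor
    · rintro ⟨Y, Z, hYZ, hY, hZ⟩
      obtain ⟨a, ha, hYa⟩ := (ihφ Y).mp hY
      obtain ⟨b, hb, hZb⟩ := (ihψ Z).mp hZ
      exact ⟨.or a b, ⟨a, ha, b, hb, rfl⟩, Y, Z, hYZ, hYa, hZb⟩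
    · rintro ⟨χ, ⟨a, ha, b, hb, rfl⟩, Y, Z, hYZ, hYa, hZb⟩
      exact ⟨Y, Z, hYZ, (ihφ Y).mpr ⟨a, ha, hYa⟩, (ihψ Z).mpr ⟨b, hb, hZb⟩⟩
  | idis φ ψ ihφ ihψ =>
    simp only [PLISat, PLISelections, List.mem_append, ihφ, ihψ]
    constructor
    · rintro (⟨χ, h, hX⟩ | ⟨χ, h, hX⟩)
      exacts [⟨χ, Or.inl h, hX⟩, ⟨χ, Or.inr h, hX⟩]
    · rintro ⟨χ, h | h, hX⟩
      exacts [Or.inl ⟨χ, h, hX⟩, Or.inr ⟨χ, h, hX⟩]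
end

section
/- Normal form for ML(⊻): let φ be a formula of ML(⊻) and let F be the set of all ⊻-selection functions for φ. Then for every Kripke model K and team T of K: K,T ⊨ φ if and only if K,T ⊨ φ^f for some f ∈ F (i.e., φ is equivalent to the intuitionistic disjunction of the ML-formulas φ^f over all f ∈ F). -/
/-- Formulas of modal logic `ML` in negation normal form. -/
inductive MLForm : Type
  | pos : ℕ → MLForm
  | neg : ℕ → MLForm
  | and : MLForm → MLForm → MLForm
  | or  : MLForm → MLForm → MLForm
  | dia : MLForm → MLForm
  | box : MLForm → MLForm

/-- Team semantics for `ML`. A team is a set of worlds. -/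
def MLSat {W : Type} (K : Kripke W) : Set W → MLForm → Prop
  | T, .pos p => T ⊆ K.V p
  | T, .neg p => T ∩ K.V p = ∅
  | T, .and φ ψ => MLSat K T φ ∧ MLSat K T ψ
  | T, .or φ ψ => ∃ T₁ T₂, T₁ ∪ T₂ = T ∧ MLSat K T₁ φ ∧ MLSat K T₂ ψ
  | T, .dia φ => ∃ T', K.step T T' ∧ MLSat K T' φ
  | T, .box φ => MLSat K (K.img T) φ

/-- The list of all formulas `φ^f`, for `f` a `⊻`-selection function for `φ`:
each occurrence of a subformula `ψ ⊻ θ` is (simultaneously) replaced by one of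
its two immediate disjuncts. Each `φ^f` is a `⊻`-free `ML`-formula. -/
def MLISelections : MLIForm → List MLForm
  | .pos p => [.pos p]
  | .neg p => [.neg p]
  | .and φ ψ => (MLISelections φ).flatMap fun a =>
      (MLISelections ψ).map fun b => MLForm.and a b
  | .or φ ψ => (MLISelections φ).flatMap fun a =>
      (MLISelections ψ).map fun b => MLForm.or a b
  | .dia φ => (MLISelections φ).map MLForm.dia
  | .box φ => (MLISelections φ).map MLForm.box
  | .idis φ ψ => MLISelections φ ++ MLISelections ψ

/-- Normal form for `ML(⊻)`: `K,T ⊨ φ` iff `K,T ⊨ φ^f` for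
some `⊻`-selection function `f` for `φ`, i.e. `φ` is equivalent to the
intuitionistic disjunction of the `ML`-formulas `φ^f`. -/
theorem mli_normal_form {W : Type} [Nonempty W] (K : Kripke W) (T : Set W)
    (φ : MLIForm) :
    MLISat K T φ ↔ ∃ χ ∈ MLISelections φ, MLSat K T χ := by
  induction φ generalizing T with
  | pos p => simp [MLISat, MLISelections, MLSat]
  | neg p => simp [MLISat, MLISelections, MLSat]
  | and φ ψ ihφ ihψ =>
    simp only [MLISat, MLISelections, List.mem_flatMap, List.mem_map, ihφ, ihψ]
    constructor
    · rintro ⟨⟨a, ha, hsa⟩, ⟨b, hb, hsb⟩⟩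
      exact ⟨_, ⟨a, ha, b, hb, rfl⟩, hsa, hsb⟩
    · rintro ⟨_, ⟨a, ha, b, hb, rfl⟩, hsa, hsb⟩
      exact ⟨⟨a, ha, hsa⟩, ⟨b, hb, hsb⟩⟩
  | or φ ψ ihφ ihψ =>
    simp only [MLISat, MLISelections, List.mem_flatMap, List.mem_map]
    constructor
    · rintro ⟨T₁, T₂, rfl, h1, h2⟩
      obtain ⟨a, ha, hsa⟩ := (ihφ T₁).mp h1
      obtain ⟨b, hb, hsb⟩ := (ihψ T₂).mp h2
      exact ⟨_, ⟨a, ha, b, hb, rfl⟩, T₁, T₂, rfl, hsa, hsb⟩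
    · rintro ⟨_, ⟨a, ha, b, hb, rfl⟩, T₁, T₂, rfl, hsa, hsb⟩
      exact ⟨T₁, T₂, rfl, (ihφ T₁).mpr ⟨a, ha, hsa⟩, (ihψ T₂).mpr ⟨b, hb, hsb⟩⟩
  | dia φ ih =>
    simp only [MLISat, MLISelections, List.mem_map]
    constructor
    · rintro ⟨T', hst, h⟩
      obtain ⟨a, ha, hsa⟩ := (ih T').mp h
      exact ⟨_, ⟨a, ha, rfl⟩, T', hst, hsa⟩
    · rintro ⟨_, ⟨a, ha, rfl⟩, T', hst, hsa⟩
      exact ⟨T', hst, (ih T').mpr ⟨a, ha, hsa⟩⟩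
  | box φ ih =>
    simp only [MLISat, MLISelections, List.mem_map]
    constructor
    · intro h
      obtain ⟨a, ha, hsa⟩ := (ih _).mp h
      exact ⟨_, ⟨a, ha, rfl⟩, hsa⟩
    · rintro ⟨_, ⟨a, ha, rfl⟩, hsa⟩
      exact (ih _).mpr ⟨a, ha, hsa⟩
  | idis φ ψ ihφ ihψ =>
    simp only [MLISat, MLISelections, List.mem_append, ihφ, ihψ]
    constructor
    · rintro (⟨a, ha, hs⟩ | ⟨a, ha, hs⟩)
      exacts [⟨a, Or.inl ha, hs⟩, ⟨a, Or.inr ha, hs⟩]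
    · rintro ⟨a, ha | ha, hs⟩
      exacts [Or.inl ⟨a, ha, hs⟩, Or.inr ⟨a, ha, hs⟩]
end

section
/- For all proposition symbols p₁,…,pₙ,q and every propositional team X whose domain contains them: X ⊨ =(p₁,…,pₙ,q) if and only if X satisfies the PL(⊻)-formula ⋁_{a₁,…,aₙ ∈ {⊥,⊤}} (p₁^{a₁} ∧ … ∧ pₙ^{aₙ} ∧ (q ⊻ ¬q)), where the big ∨ is the splitting disjunction over all 2ⁿ sign tuples, p^⊤ denotes p and p^⊥ denotes ¬p. -/
/-- Formulas of propositional dependence logic `PD`: propositional logic in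
negation normal form extended with dependence atoms `=(p₁,…,pₙ,q)`. -/
inductive PDForm : Type
  | pos : ℕ → PDForm
  | neg : ℕ → PDForm
  | and : PDForm → PDForm → PDForm
  | or  : PDForm → PDForm → PDForm
  | dep : List ℕ → ℕ → PDForm

/-- Team semantics for `PD`. -/
def PDSat : Set (ℕ → Bool) → PDForm → Prop
  | X, .pos p => ∀ s ∈ X, s p = true
  | X, .neg p => ∀ s ∈ X, s p = false
  | X, .and φ ψ => PDSat X φ ∧ PDSat X ψ
  | X, .or φ ψ => ∃ Y Z, Y ∪ Z = X ∧ PDSat Y φ ∧ PDSat Z ψ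
  | X, .dep ps q => ∀ s ∈ X, ∀ t ∈ X, (∀ p ∈ ps, s p = t p) → s q = t q

/-- All tuples (lists) of `n` signs (Booleans), i.e. `{⊥,⊤}ⁿ`. -/
def allBLists : ℕ → List (List Bool)
  | 0 => [[]]
  | n + 1 => (allBLists n).flatMap fun l => [true :: l, false :: l]

/-- `p^a`: the literal `p` if `a = ⊤` and `¬p` if `a = ⊥`. -/
def plLit (p : ℕ) (a : Bool) : PLIForm := if a then .pos p else .neg p

/-- The conjunction `p₁^{a₁} ∧ … ∧ pₙ^{aₙ} ∧ (q ⊻ ¬q)`. -/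
def plDepConj (ps : List ℕ) (a : List Bool) (q : ℕ) : PLIForm :=
  (List.zipWith plLit ps a).foldr PLIForm.and (PLIForm.idis (.pos q) (.neg q))

/-- Big splitting disjunction `⋁` of a (nonempty) list of formulas. -/
def plBigOr : List PLIForm → PLIForm
  | [] => .pos 0
  | [φ] => φ
  | φ :: ψ :: l => .or φ (plBigOr (ψ :: l))

/-- The `PL(⊻)`-formula
`⋁_{a₁,…,aₙ ∈ {⊥,⊤}} (p₁^{a₁} ∧ … ∧ pₙ^{aₙ} ∧ (q ⊻ ¬q))`. -/
def plDepTranslation (ps : List ℕ) (q : ℕ) : PLIForm :=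
  plBigOr ((allBLists ps.length).map fun a => plDepConj ps a q)

lemma mem_allBLists {a : List Bool} {n : ℕ} : a ∈ allBLists n ↔ a.length = n := by
  induction n generalizing a with
  | zero => simp [allBLists, List.length_eq_zero_iff]
  | succ n ih =>
    simp only [allBLists, List.mem_flatMap, List.mem_cons, List.mem_singleton]
    constructor
    · rintro ⟨l, hl, rfl | rfl | h⟩ <;> simp_all [ih.mp hl]
    · intro h
      cases a with
      | nil => simp at h
      | cons b t =>
        refine ⟨t, ih.mpr (by simpa using h), ?_⟩
        cases b <;> simp

lemma allBLists_nodup (n : ℕ) : (allBLists n).Nodup := by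
  induction n with
  | zero => simp [allBLists]
  | succ n ih =>
    rw [allBLists, List.nodup_flatMap]
    refine ⟨fun l _ => by simp, ih.imp fun {l₁ l₂} hne => ?_⟩
    simp only [Function.onFun, List.disjoint_left, List.mem_cons, List.mem_singleton]
    rintro x (rfl | rfl | h) (h' | h' | h') <;> simp_all

lemma map_eq_of_agree {s t : ℕ → Bool} {ps : List ℕ}
    (h : ∀ p ∈ ps, s p = t p) : ps.map s = ps.map t := by
  induction ps with
  | nil => rfl
  | cons p ps ih =>
    simp only [List.map_cons]
    exact congrArg₂ _ (h p (by simp)) (ih fun p hp => h p (List.mem_cons_of_mem _ hp))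

lemma agree_of_map_eq {s t : ℕ → Bool} {ps : List ℕ}
    (h : ps.map s = ps.map t) : ∀ p ∈ ps, s p = t p := by
  induction ps with
  | nil => simp
  | cons p ps ih =>
    simp only [List.map_cons, List.cons.injEq] at h
    intro p' hp'
    rcases List.mem_cons.mp hp' with rfl | hp'
    · exact h.1
    · exact ih h.2 p' hp'

lemma conj_sat (ps : List ℕ) (a : List Bool) (q : ℕ) (X : Set (ℕ → Bool))
    (hlen : a.length = ps.length) :
    PLISat X (plDepConj ps a q) ↔
      (∀ s ∈ X, ps.map s = a) ∧
        ((∀ s ∈ X, s q = true) ∨ (∀ s ∈ X, s q = false)) := by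
  induction ps generalizing a with
  | nil =>
    rw [List.length_eq_zero_iff.mp hlen]
    simp [plDepConj, PLISat]
  | cons p ps ih =>
    cases a with
    | nil => simp at hlen
    | cons b t =>
      have hlen' : t.length = ps.length := by simpa using hlen
      have hlit : PLISat X (plLit p b) ↔ ∀ s ∈ X, s p = b := by
        cases b <;> simp [plLit, PLISat]
      have : plDepConj (p :: ps) (b :: t) q = .and (plLit p b) (plDepConj ps t q) := rfl
      rw [this]
      show PLISat X (plLit p b) ∧ PLISat X (plDepConj ps t q) ↔ _
      rw [hlit, ih t hlen']
      constructor
      · rintro ⟨h1, h2, h3⟩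
        exact ⟨fun s hs => by simp [h1 s hs, h2 s hs], h3⟩
      · rintro ⟨h1, h3⟩
        refine ⟨fun s hs => ?_, fun s hs => ?_, h3⟩ <;>
          · have := h1 s hs; simp only [List.map_cons, List.cons.injEq] at this; tauto

lemma bigOr_map_sat {α : Type*} (l : List α) (F : α → PLIForm) (X : Set (ℕ → Bool))
    (hne : l ≠ []) (hnd : l.Nodup) :
    PLISat X (plBigOr (l.map F)) ↔
      ∃ f : α → Set (ℕ → Bool), (⋃ a ∈ l, f a) = X ∧ ∀ a ∈ l, PLISat (f a) (F a) := by
  classical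
  induction l generalizing X with
  | nil => exact absurd rfl hne
  | cons a t ih =>
    cases t with
    | nil =>
      simp only [List.map_cons, List.map_nil, plBigOr]
      constructor
      · intro h
        exact ⟨fun _ => X, by simp, by simpa⟩
      · rintro ⟨f, hu, hf⟩
        have : f a = X := by simpa using hu
        rw [← this]
        exact hf a (by simp)
    | cons b t' =>
      have hne' : b :: t' ≠ [] := by simp
      have hnd' : (b :: t').Nodup := hnd.of_cons
      have ha : a ∉ b :: t' := (List.nodup_cons.mp hnd).1
      have : plBigOr ((a :: b :: t').map F) = .or (F a) (plBigOr ((b :: t').map F)) := rfl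
      rw [this]
      show (∃ Y Z, Y ∪ Z = X ∧ PLISat Y (F a) ∧ PLISat Z (plBigOr ((b :: t').map F))) ↔ _
      constructor
      · rintro ⟨Y, Z, hYZ, hY, hZ⟩
        obtain ⟨g, hgu, hg⟩ := (ih _ hne' hnd').mp hZ
        refine ⟨fun c => if c = a then Y else g c, ?_, ?_⟩
        · rw [← hYZ, ← hgu]
          ext x
          simp only [Set.mem_iUnion, Set.mem_union]
          constructor
          · rintro ⟨c, hc, hx⟩
            rcases List.mem_cons.mp hc with rfl | hc'
            · left; simpa using hx
            · right
              have hca : c ≠ a := fun h => ha (h ▸ hc')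
              exact ⟨c, hc', by simpa [hca] using hx⟩
          · rintro (hx | ⟨c, hc, hx⟩)
            · exact ⟨a, by simp, by simpa⟩
            · have hca : c ≠ a := fun h => ha (h ▸ hc)
              exact ⟨c, List.mem_cons_of_mem _ hc, by simpa [hca] using hx⟩
        · intro c hc
          rcases List.mem_cons.mp hc with rfl | hc'
          · simpa using hY
          · have hca : c ≠ a := fun h => ha (h ▸ hc')
            simpa [hca] using hg c hc'
      · rintro ⟨f, hu, hf⟩
        refine ⟨f a, ⋃ c ∈ b :: t', f c, ?_, hf a (by simp), ?_⟩
        · rw [← hu]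
          ext x
          simp only [Set.mem_union, Set.mem_iUnion]
          constructor
          · rintro (hx | ⟨c, hc, hx⟩)
            · exact ⟨a, by simp, hx⟩
            · exact ⟨c, List.mem_cons_of_mem _ hc, hx⟩
          · rintro ⟨c, hc, hx⟩
            rcases List.mem_cons.mp hc with rfl | hc'
            · exact Or.inl hx
            · exact Or.inr ⟨c, hc', hx⟩
        · exact (ih _ hne' hnd').mpr ⟨f, rfl, fun c hc => hf c (List.mem_cons_of_mem _ hc)⟩

lemma allBLists_ne_nil (n : ℕ) : allBLists n ≠ [] := by
  intro h
  have : (List.replicate n true) ∈ allBLists n := mem_allBLists.mpr (by simp)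
  simp [h] at this

/-- A team satisfies the dependence atom `=(p₁,…,pₙ,q)` iff
it satisfies the `PL(⊻)`-formula
`⋁_{a₁,…,aₙ ∈ {⊥,⊤}} (p₁^{a₁} ∧ … ∧ pₙ^{aₙ} ∧ (q ⊻ ¬q))`. -/
theorem pd_dep_translation (ps : List ℕ) (q : ℕ) (X : Set (ℕ → Bool)) :
    PDSat X (.dep ps q) ↔ PLISat X (plDepTranslation ps q) := by
  have hnd := allBLists_nodup ps.length
  have hne := allBLists_ne_nil ps.length
  rw [show PDSat X (.dep ps q) ↔
      (∀ s ∈ X, ∀ t ∈ X, (∀ p ∈ ps, s p = t p) → s q = t q) from Iff.rfl]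
  rw [plDepTranslation, bigOr_map_sat _ _ _ hne hnd]
  constructor
  · intro hdep
    refine ⟨fun a => {s ∈ X | ps.map s = a}, ?_, ?_⟩
    · ext s
      simp only [Set.mem_iUnion, Set.mem_setOf_eq]
      constructor
      · rintro ⟨a, _, hs, _⟩; exact hs
      · intro hs
        exact ⟨ps.map s, mem_allBLists.mpr (by simp), hs, rfl⟩
    · intro a ha
      rw [conj_sat _ _ _ _ (by simpa using mem_allBLists.mp ha)]
      refine ⟨fun s hs => hs.2, ?_⟩
      by_cases hE : ∃ s₀, s₀ ∈ ({s ∈ X | ps.map s = a} : Set (ℕ → Bool))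
      · obtain ⟨s₀, hs₀⟩ := hE
        cases h0 : s₀ q with
        | true =>
          left
          intro s hs
          rw [← h0]
          exact hdep s hs.1 s₀ hs₀.1 (agree_of_map_eq (hs.2.trans hs₀.2.symm))
        | false =>
          right
          intro s hs
          rw [← h0]
          exact hdep s hs.1 s₀ hs₀.1 (agree_of_map_eq (hs.2.trans hs₀.2.symm))
      · left
        intro s hs
        exact absurd ⟨s, hs⟩ hE
  · rintro ⟨f, hu, hf⟩
    intro s hs t ht hagree
    have hsmem : s ∈ ⋃ a ∈ allBLists ps.length, f a := hu ▸ hs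
    have htmem : t ∈ ⋃ a ∈ allBLists ps.length, f a := hu ▸ ht
    simp only [Set.mem_iUnion] at hsmem htmem
    obtain ⟨a, ha, hsa⟩ := hsmem
    obtain ⟨b, hb, htb⟩ := htmem
    have hca := (conj_sat _ _ _ _ (by simpa using mem_allBLists.mp ha)).mp (hf a ha)
    have hcb := (conj_sat _ _ _ _ (by simpa using mem_allBLists.mp hb)).mp (hf b hb)
    have hab : a = b := by
      rw [← hca.1 s hsa, ← hcb.1 t htb]
      exact map_eq_of_agree hagree
    subst hab
    rcases hca.2 with h | h
    · rw [h s hsa, h t htb]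
    · rw [h s hsa, h t htb]
end

section
/- Soundness of the rule (I⊻): let φ be a PL(⊻)-context (a PL(⊻)-formula possibly containing occurrences of a placeholder symbol *), let ψ₁, ψ₂ be PL(⊻)-formulas, and let i ∈ {1,2}. If the formula φ(ψᵢ/*), obtained by uniformly substituting ψᵢ for every occurrence of * in φ, is valid, then the formula φ((ψ₁⊻ψ₂)/*), obtained by uniformly substituting ψ₁⊻ψ₂ for every occurrence of *, is valid. -/
/-- A `PL(⊻)`-context: a `PL(⊻)`-formula possibly containing occurrences of a
placeholder symbol `*`. -/
inductive PLICtx : Type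
  | star : PLICtx
  | pos : ℕ → PLICtx
  | neg : ℕ → PLICtx
  | and : PLICtx → PLICtx → PLICtx
  | or  : PLICtx → PLICtx → PLICtx
  | idis : PLICtx → PLICtx → PLICtx

/-- `φ(χ/*)`: uniformly substitute the formula `χ` for each occurrence of the
placeholder `*` in the context `φ`. -/
def PLICtx.subst : PLICtx → PLIForm → PLIForm
  | .star, χ => χ
  | .pos p, _ => .pos p
  | .neg p, _ => .neg p
  | .and φ ψ, χ => .and (φ.subst χ) (ψ.subst χ)
  | .or φ ψ, χ => .or (φ.subst χ) (ψ.subst χ)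
  | .idis φ ψ, χ => .idis (φ.subst χ) (ψ.subst χ)


theorem PLICtx.subst_mono (φ : PLICtx) (χ χ' : PLIForm)
    (h : ∀ X : Set (ℕ → Bool), PLISat X χ → PLISat X χ') :
    ∀ X : Set (ℕ → Bool), PLISat X (φ.subst χ) → PLISat X (φ.subst χ') := by
  induction φ with
  | star => exact h
  | pos p => exact fun X hx => hx
  | neg p => exact fun X hx => hx
  | and a b iha ihb => exact fun X ⟨ha, hb⟩ => ⟨iha X ha, ihb X hb⟩
  | or a b iha ihb =>
    rintro X ⟨Y, Z, rfl, hY, hZ⟩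
    exact ⟨Y, Z, rfl, iha Y hY, ihb Z hZ⟩
  | idis a b iha ihb =>
    rintro X (hx | hx)
    · exact Or.inl (iha X hx)
    · exact Or.inr (ihb X hx)

/-- Soundness of the rule `(I⊻)`: if `φ(ψᵢ/*)` is valid for
some `i ∈ {1,2}`, then `φ((ψ₁ ⊻ ψ₂)/*)` is valid. -/
theorem idis_rule_sound (φ : PLICtx) (ψ₁ ψ₂ : PLIForm)
    (h : (∀ X : Set (ℕ → Bool), PLISat X (φ.subst ψ₁)) ∨
         (∀ X : Set (ℕ → Bool), PLISat X (φ.subst ψ₂))) :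
    ∀ X : Set (ℕ → Bool), PLISat X (φ.subst (.idis ψ₁ ψ₂)) := by
  rcases h with h | h
  · exact fun X => PLICtx.subst_mono φ ψ₁ (.idis ψ₁ ψ₂) (fun X hx => Or.inl hx) X (h X)
  · exact fun X => PLICtx.subst_mono φ ψ₂ (.idis ψ₁ ψ₂) (fun X hx => Or.inr hx) X (h X)
end

section
/- If a PL(⊻)-formula φ is valid, then there exists a ⊻-selection function f for φ such that the ⊻-free PL-formula φ^f is valid. -/
/-- PL satisfaction is downward closed (flatness). -/
lemma plsat_mono : ∀ (χ : PLForm) (X Y : Set (ℕ → Bool)), Y ⊆ X → PLSat X χ → PLSat Y χ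
  | .pos _, _, _, hsub, h => fun s hs => h s (hsub hs)
  | .neg _, _, _, hsub, h => fun s hs => h s (hsub hs)
  | .and φ ψ, X, Y, hsub, h =>
      ⟨plsat_mono φ X Y hsub h.1, plsat_mono ψ X Y hsub h.2⟩
  | .or φ ψ, X, Y, hsub, ⟨A, B, hAB, hA, hB⟩ =>
      ⟨A ∩ Y, B ∩ Y, by
        rw [← Set.union_inter_distrib_right, hAB]
        exact Set.inter_eq_right.mpr hsub,
       plsat_mono φ A (A ∩ Y) Set.inter_subset_left hA,
       plsat_mono ψ B (B ∩ Y) Set.inter_subset_left hB⟩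

/-- If a team satisfies a `PL(⊻)`-formula, it satisfies some selection. -/
lemma plisat_selection : ∀ (φ : PLIForm) (X : Set (ℕ → Bool)),
    PLISat X φ → ∃ χ ∈ PLISelections φ, PLSat X χ
  | .pos p, X, h => ⟨.pos p, by simp [PLISelections], h⟩
  | .neg p, X, h => ⟨.neg p, by simp [PLISelections], h⟩
  | .and φ ψ, X, ⟨h1, h2⟩ => by
      obtain ⟨a, ha, hsa⟩ := plisat_selection φ X h1
      obtain ⟨b, hb, hsb⟩ := plisat_selection ψ X h2
      exact ⟨.and a b, by
        simp only [PLISelections, List.mem_flatMap, List.mem_map]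
        exact ⟨a, ha, b, hb, rfl⟩, hsa, hsb⟩
  | .or φ ψ, X, ⟨Y, Z, hYZ, h1, h2⟩ => by
      obtain ⟨a, ha, hsa⟩ := plisat_selection φ Y h1
      obtain ⟨b, hb, hsb⟩ := plisat_selection ψ Z h2
      exact ⟨.or a b, by
        simp only [PLISelections, List.mem_flatMap, List.mem_map]
        exact ⟨a, ha, b, hb, rfl⟩, Y, Z, hYZ, hsa, hsb⟩
  | .idis φ ψ, X, h => by
      rcases h with h | h
      · obtain ⟨a, ha, hsa⟩ := plisat_selection φ X h
        exact ⟨a, by simp [PLISelections, ha], hsa⟩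
      · obtain ⟨b, hb, hsb⟩ := plisat_selection ψ X h
        exact ⟨b, by simp [PLISelections, hb], hsb⟩

/-- If a `PL(⊻)`-formula `φ` is valid, then `φ^f` is a valid
`PL`-formula for some `⊻`-selection function `f` for `φ`. -/
theorem pli_valid_selection (φ : PLIForm)
    (h : ∀ X : Set (ℕ → Bool), PLISat X φ) :
    ∃ χ ∈ PLISelections φ, ∀ X : Set (ℕ → Bool), PLSat X χ := by
  obtain ⟨χ, hm, hs⟩ := plisat_selection φ Set.univ (h Set.univ)
  exact ⟨χ, hm, fun X => plsat_mono χ Set.univ X (Set.subset_univ X) hs⟩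
end
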